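/- arXiv:1910.14032 — 2 statements merged into one kernel-verified Lean document; each statement's English description precedes it below -/
import Mathlib

section
/- For a balanced ensemble of pure test states (d Σ_j p_j ρ_j = 1), the preparation operator Θ_P = d Σ_j p_j ρ_j ⊗ ρ_j* satisfies |Φ⟩⟨Φ| ≤ Θ_P ≤ 1, and |Φ⟩ is an eigenvector of Θ_P with eigenvalue 1. -/
open scoped Matrix Kronecker ComplexOrder Matrix.Norms.L2Operator

/-- The rank-one projector `|ψ⟩⟨ψ|` of a vector `ψ`. -/
noncomputable def proj {n : Type*} [Fintype n] (ψ : n → ℂ) : Matrix n n ℂ :=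
  Matrix.vecMulVec ψ (star ψ)

/-- The maximally entangled vector `Φ = (1/√d) ∑ⱼ |jj⟩`. -/
noncomputable def maxEnt (d : ℕ) : Fin d × Fin d → ℂ :=
  fun p => if p.1 = p.2 then (1 / Real.sqrt d : ℝ) else 0

/-!
Write `ρⱼ = |ψⱼ⟩⟨ψⱼ|` and `wⱼ = √d · (ψⱼ ⊗ ψⱼ*)`, so that `Θ_P = ∑ⱼ pⱼ |wⱼ⟩⟨wⱼ|`. Since `ψ ⊗ ψ*`
is the row-major vectorization of `ρ`, balance says exactly that the mean `∑ⱼ pⱼ wⱼ` is `Φ`,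
and every overlap `⟨wⱼ|Φ⟩ = tr ρⱼ` equals `1`. Hence `Θ_P Φ = ∑ⱼ pⱼ wⱼ = Φ`, and
`Θ_P - |Φ⟩⟨Φ| = ∑ⱼ pⱼ |wⱼ - Φ⟩⟨wⱼ - Φ|` is a covariance. For the upper bound,
`1 = (d ∑ⱼ pⱼ ρⱼ) ⊗ 1` gives `1 - Θ_P = d ∑ⱼ pⱼ ρⱼ ⊗ (1 - ρⱼ*)`, a sum of Kronecker products
of positive semidefinite matrices.
-/

open Matrix

section Projector

variable {m n : Type*} [Fintype m] [Fintype n]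

lemma proj_posSemidef (ψ : n → ℂ) : (proj ψ).PosSemidef :=
  posSemidef_vecMulVec_self_star ψ

lemma proj_mulVec (ψ x : n → ℂ) : proj ψ *ᵥ x = (star ψ ⬝ᵥ x) • ψ := by
  rw [proj, vecMulVec_mulVec, op_smul_eq_smul]

lemma proj_smul (c : ℂ) (ψ : n → ℂ) : proj (c • ψ) = (c * star c) • proj ψ := by
  rw [proj, star_smul, smul_vecMulVec, vecMulVec_smul, smul_smul, proj]

lemma proj_map_conj (ψ : n → ℂ) : (proj ψ).map (starRingEnd ℂ) = proj (star ψ) := by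
  ext i k
  simp [proj, vecMulVec_apply]

lemma trace_proj (ψ : n → ℂ) : (proj ψ).trace = star ψ ⬝ᵥ ψ := by
  rw [proj, trace_vecMulVec, dotProduct_comm]

lemma posSemidef_one_sub_proj [DecidableEq n] {ψ : n → ℂ} (hψ : star ψ ⬝ᵥ ψ = 1) :
    (1 - proj ψ).PosSemidef := by
  have hidem : proj ψ * proj ψ = proj ψ := by
    rw [proj, vecMulVec_mul_vecMulVec, hψ, one_smul]
  have hherm : (proj ψ)ᴴ = proj ψ := (proj_posSemidef ψ).1.eq
  have hsq : 1 - proj ψ = (1 - proj ψ)ᴴ * (1 - proj ψ) := by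
    rw [conjTranspose_sub, conjTranspose_one, hherm, sub_mul, one_mul, mul_sub, mul_one, hidem,
      sub_self, sub_zero]
  rw [hsq]
  exact posSemidef_conjTranspose_mul_self _

-- Mathlib's `vec` stacks columns; the Kronecker product vector `a ↦ ψ a.1 * χ a.2` stacks rows.
lemma proj_kronecker_proj (ψ : m → ℂ) (χ : n → ℂ) :
    proj ψ ⊗ₖ proj χ = proj (vec (vecMulVec ψ χ)ᵀ) := by
  ext ⟨i, k⟩ ⟨i', k'⟩
  simp only [proj, kronecker_apply, vecMulVec_apply, vec, transpose_apply, Pi.star_apply,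
    star_mul']
  ring

lemma proj_kronecker_map_conj (ψ : n → ℂ) :
    proj ψ ⊗ₖ (proj ψ).map (starRingEnd ℂ) = proj (vec (proj ψ)ᵀ) := by
  rw [proj_map_conj, proj_kronecker_proj]
  rfl

end Projector

lemma star_vec_transpose_dotProduct_vec_one {R n : Type*} [CommSemiring R] [StarRing R]
    [Fintype n] [DecidableEq n] (A : Matrix n n R) :
    star (vec Aᵀ) ⬝ᵥ vec 1 = star A.trace := by
  rw [star_vec_dotProduct_vec, mul_one, trace_conjTranspose, trace_transpose]

lemma maxEnt_eq_smul_vec_one (d : ℕ) :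
    maxEnt d = ((Real.sqrt d : ℝ) : ℂ)⁻¹ • vec (1 : Matrix (Fin d) (Fin d) ℂ) := by
  ext ⟨i, j⟩
  by_cases h : i = j
  · simp [maxEnt, h]
  · simp [maxEnt, h, one_apply, Ne.symm h]

lemma posSemidef_sum_smul_proj_sub_proj_sum {ι n : Type*} [Fintype ι] [Fintype n]
    {c : ι → ℂ} (hc : ∀ j, 0 ≤ c j) (hc1 : ∑ j, c j = 1) (w : ι → n → ℂ) :
    (∑ j, c j • proj (w j) - proj (∑ j, c j • w j)).PosSemidef := by
  set μ := ∑ j, c j • w j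
  have hvar : ∑ j, c j • proj (w j) - proj μ = ∑ j, c j • proj (w j - μ) := by
    ext a b
    have hμa : ∑ j, c j * w j a = μ a := by
      simp only [μ, Finset.sum_apply, Pi.smul_apply, smul_eq_mul]
    have hμb : ∑ j, c j * star (w j b) = star (μ b) := by
      simp only [μ, Finset.sum_apply, Pi.smul_apply, smul_eq_mul, star_sum, star_mul',
        (IsSelfAdjoint.of_nonneg (hc _)).star_eq]
    simp only [Matrix.sub_apply, Matrix.sum_apply, Matrix.smul_apply, proj, vecMulVec_apply,
      Pi.sub_apply, Pi.star_apply, smul_eq_mul, star_sub]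
    calc ∑ j, c j * (w j a * star (w j b)) - μ a * star (μ b)
        = ∑ j, c j * (w j a * star (w j b)) - (∑ j, c j * w j a) * star (μ b)
            - μ a * ∑ j, c j * star (w j b) + (∑ j, c j) * (μ a * star (μ b)) := by
          rw [hμa, hμb, hc1]; ring
      _ = ∑ j, c j * ((w j a - μ a) * (star (w j b) - star (μ b))) := by
          simp only [Finset.sum_mul, Finset.mul_sum, ← Finset.sum_sub_distrib,
            ← Finset.sum_add_distrib]
          exact Finset.sum_congr rfl fun j _ => by ring
  rw [hvar]
  exact posSemidef_sum _ fun j _ => (proj_posSemidef _).smul (hc j)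

lemma Matrix.kronecker_sub {α l m n p : Type*} [NonUnitalNonAssocRing α] (A : Matrix l m α)
    (B C : Matrix n p α) : A ⊗ₖ (B - C) = A ⊗ₖ B - A ⊗ₖ C :=
  ext fun _ _ => mul_sub _ _ _

lemma posSemidef_one_sub_sum_smul_kronecker {𝕜 ι m n : Type*} [RCLike 𝕜] [Fintype ι]
    [Fintype m] [Fintype n] [DecidableEq m] [DecidableEq n] {c : ι → 𝕜} (hc : ∀ j, 0 ≤ c j)
    {A : ι → Matrix m m 𝕜} {B : ι → Matrix n n 𝕜} (hA : ∀ j, (A j).PosSemidef)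
    (hB : ∀ j, (1 - B j).PosSemidef) (hsum : ∑ j, c j • A j = 1) :
    (1 - ∑ j, c j • (A j ⊗ₖ B j)).PosSemidef := by
  have hone : (1 : Matrix (m × n) (m × n) 𝕜) = ∑ j, c j • (A j ⊗ₖ 1) := by
    rw [← one_kronecker_one, ← hsum]
    ext ⟨i, k⟩ ⟨i', k'⟩
    simp [Matrix.sum_apply, Finset.sum_mul, mul_assoc]
  have hsplit : 1 - ∑ j, c j • (A j ⊗ₖ B j) = ∑ j, c j • (A j ⊗ₖ (1 - B j)) := by
    simp only [hone, ← Finset.sum_sub_distrib, ← smul_sub, ← kronecker_sub]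
  rw [hsplit]
  exact posSemidef_sum _ fun j _ => ((hA j).kronecker (hB j)).smul (hc j)

section BalancedEnsemble

variable {ι : Type*} [Fintype ι]

lemma natCast_smul_sum_smul_proj_kronecker_map_conj {n : Type*} [Fintype n] (d : ℕ)
    (c : ι → ℂ) (ψ : ι → n → ℂ) :
    (d : ℂ) • ∑ j, c j • (proj (ψ j) ⊗ₖ (proj (ψ j)).map (starRingEnd ℂ)) =
      ∑ j, c j • proj (((Real.sqrt d : ℝ) : ℂ) • vec (proj (ψ j))ᵀ) := by
  have hss : ((Real.sqrt d : ℝ) : ℂ) * star ((Real.sqrt d : ℝ) : ℂ) = d := by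
    rw [Complex.star_def, Complex.conj_ofReal, ← Complex.ofReal_mul,
      Real.mul_self_sqrt (Nat.cast_nonneg d), Complex.ofReal_natCast]
  simp only [proj_kronecker_map_conj, proj_smul, hss, Finset.smul_sum, smul_comm (d : ℂ)]

lemma sum_smul_sqrt_smul_vec_proj_transpose_of_balanced {d : ℕ} (hd : 0 < d) {c : ι → ℂ}
    {ψ : ι → Fin d → ℂ} (hbal : (d : ℂ) • ∑ j, c j • proj (ψ j) = 1) :
    ∑ j, c j • (((Real.sqrt d : ℝ) : ℂ) • vec (proj (ψ j))ᵀ) = maxEnt d := by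
  set s : ℂ := ((Real.sqrt d : ℝ) : ℂ)
  have hs : s ≠ 0 := by simp [s, hd.ne']
  have hss : s * s = d := by
    rw [← Complex.ofReal_mul, Real.mul_self_sqrt (Nat.cast_nonneg d), Complex.ofReal_natCast]
  have hρ : ∑ j, c j • proj (ψ j) = (d : ℂ)⁻¹ • 1 := by
    rw [← hbal, smul_smul, inv_mul_cancel₀ (by exact_mod_cast hd.ne'), one_smul]
  calc ∑ j, c j • (s • vec (proj (ψ j))ᵀ) = s • vec (∑ j, c j • proj (ψ j))ᵀ := by
        simp only [transpose_sum, transpose_smul, vec_sum, vec_smul, Finset.smul_sum,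
          smul_comm s]
    _ = maxEnt d := by
        rw [hρ, maxEnt_eq_smul_vec_one, transpose_smul, transpose_one, vec_smul, smul_smul,
          ← hss, mul_inv, ← mul_assoc, mul_inv_cancel₀ hs, one_mul]

lemma star_sqrt_smul_vec_proj_transpose_dotProduct_maxEnt {d : ℕ} (hd : 0 < d)
    {ψ : Fin d → ℂ} (hψ : star ψ ⬝ᵥ ψ = 1) :
    star (((Real.sqrt d : ℝ) : ℂ) • vec (proj ψ)ᵀ) ⬝ᵥ maxEnt d = 1 := by
  rw [maxEnt_eq_smul_vec_one, star_smul, smul_dotProduct, dotProduct_smul,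
    star_vec_transpose_dotProduct_vec_one, trace_proj, hψ]
  simp [hd.ne']

end BalancedEnsemble

/-- for a balanced ensemble of pure test states (`d ∑ⱼ p_j ρ_j = 1`), the
preparation operator `Θ_P = d ∑ⱼ p_j ρ_j ⊗ ρ_j*` satisfies `|Φ⟩⟨Φ| ≤ Θ_P ≤ 1`, and `|Φ⟩`
is an eigenvector of `Θ_P` with eigenvalue `1`. -/
theorem stmt_12 (d : ℕ) (hd : 0 < d) {ι : Type} [Fintype ι]
    (p : ι → ℝ) (hp : ∀ j, 0 ≤ p j) (hpsum : ∑ j, p j = 1)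
    (ψ : ι → Fin d → ℂ) (hψ : ∀ j, star (ψ j) ⬝ᵥ ψ j = 1)
    (hbal : (d : ℂ) • ∑ j, (p j : ℂ) • proj (ψ j) = (1 : Matrix (Fin d) (Fin d) ℂ))
    (ΘP : Matrix (Fin d × Fin d) (Fin d × Fin d) ℂ)
    (hΘP : ΘP = (d : ℂ) • ∑ j, (p j : ℂ) •
      (proj (ψ j) ⊗ₖ (proj (ψ j)).map (starRingEnd ℂ))) :
    (ΘP - proj (maxEnt d)).PosSemidef ∧
      ((1 : Matrix (Fin d × Fin d) (Fin d × Fin d) ℂ) - ΘP).PosSemidef ∧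
      ΘP.mulVec (maxEnt d) = maxEnt d := by
  have hp' : ∀ j, 0 ≤ (p j : ℂ) := fun j => Complex.zero_le_real.mpr (hp j)
  set w : ι → Fin d × Fin d → ℂ := fun j => ((Real.sqrt d : ℝ) : ℂ) • vec (proj (ψ j))ᵀ
  have hΘw : ΘP = ∑ j, (p j : ℂ) • proj (w j) := by
    rw [hΘP, natCast_smul_sum_smul_proj_kronecker_map_conj]
  have hmean : ∑ j, (p j : ℂ) • w j = maxEnt d :=
    sum_smul_sqrt_smul_vec_proj_transpose_of_balanced hd hbal
  have hoverlap : ∀ j, star (w j) ⬝ᵥ maxEnt d = 1 := fun j =>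
    star_sqrt_smul_vec_proj_transpose_dotProduct_maxEnt hd (hψ j)
  refine ⟨?_, ?_, ?_⟩
  · rw [hΘw, ← hmean]
    exact posSemidef_sum_smul_proj_sub_proj_sum hp' (by exact_mod_cast hpsum) w
  · have hc : ∀ j, 0 ≤ (d : ℂ) * p j := fun j => mul_nonneg (Nat.cast_nonneg d) (hp' j)
    have hsum : ∑ j, ((d : ℂ) * p j) • proj (ψ j) = 1 := by
      simpa only [Finset.smul_sum, smul_smul] using hbal
    have hB : ∀ j, (1 - (proj (ψ j)).map (starRingEnd ℂ)).PosSemidef := fun j => by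
      rw [proj_map_conj]
      exact posSemidef_one_sub_proj (by rw [star_star, dotProduct_comm, hψ j])
    simpa only [hΘP, Finset.smul_sum, smul_smul] using
      posSemidef_one_sub_sum_smul_kronecker hc (fun j => proj_posSemidef _) hB hsum
  · rw [hΘw, sum_mulVec]
    simp only [smul_mulVec, proj_mulVec, hoverlap, one_smul]
    exact hmean
end

section
/- For a balanced strategy with process verification operator Θ satisfying |Φ⟩⟨Φ| ≤ Θ ≤ 1 and spectral gap ν = 1 − ‖Θ − |Φ⟩⟨Φ|‖, the maximal passing probability satisfies p_E(Θ, ε) ≤ 1 − νε for all ε ∈ [0,1]. -/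
/-! Write `p = |Φ⟩⟨Φ|` and `a = Θ - p ≥ 0`. Compressing `p ≤ Θ ≤ 1` by `p` gives `p a p = 0`,
hence `a p = 0` (write `a = c⋆c`), so `a = (1 - p) a (1 - p) ≤ ‖a‖ (1 - p)`. This is the operator
inequality `Θ ≤ (1 - ν) 1 + ν p`, and pairing it with a feasible `χ` (trace one by the partial-trace
constraint, `⟨Φ|χ|Φ⟩ ≤ 1 - ε`) gives `tr(Θχ) ≤ 1 - νε`. -/

open scoped Matrix Kronecker ComplexOrder Matrix.Norms.L2Operator

/-- Partial trace over the first tensor factor. -/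
noncomputable def ptrace1 {d : ℕ} (M : Matrix (Fin d × Fin d) (Fin d × Fin d) ℂ) :
    Matrix (Fin d) (Fin d) ℂ :=
  fun j l => ∑ a, M (a, j) (a, l)

/-- The maximal passing probability
`p_E(Θ, ε) := max { tr(Θ χ) : χ ≥ 0, tr₁ χ = 1/d, ⟨Φ|χ|Φ⟩ ≤ 1 − ε }`. -/
noncomputable def pE (d : ℕ) (Θ : Matrix (Fin d × Fin d) (Fin d × Fin d) ℂ) (ε : ℝ) : ℝ :=
  sSup { x : ℝ | ∃ χ : Matrix (Fin d × Fin d) (Fin d × Fin d) ℂ,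
    χ.PosSemidef ∧ ptrace1 χ = (1 / (d : ℂ)) • (1 : Matrix (Fin d) (Fin d) ℂ) ∧
    (star (maxEnt d) ⬝ᵥ χ.mulVec (maxEnt d)).re ≤ 1 - ε ∧ x = ((Θ * χ).trace).re }

section CStar

variable {A : Type*} [CStarAlgebra A] [PartialOrder A] [StarOrderedRing A]

theorem mul_eq_zero_of_nonneg_of_star_mul_mul_eq_zero {a b : A} (ha : 0 ≤ a)
    (h : star b * a * b = 0) : a * b = 0 := by
  obtain ⟨c, rfl⟩ := CStarAlgebra.nonneg_iff_eq_star_mul_self.mp ha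
  have hcb : c * b = 0 := by
    rw [← CStarRing.star_mul_self_eq_zero_iff, star_mul, mul_assoc, ← mul_assoc (star c),
      ← mul_assoc, h]
  rw [mul_assoc, hcb, mul_zero]

variable {p θ : A}

theorem IsStarProjection.sub_mul_self_eq_zero (hp : IsStarProjection p) (hpθ : p ≤ θ)
    (hθ : θ ≤ 1) : (θ - p) * p = 0 := by
  refine mul_eq_zero_of_nonneg_of_star_mul_mul_eq_zero (sub_nonneg.mpr hpθ) (le_antisymm ?_ ?_)
  · have := star_left_conjugate_le_conjugate hθ p
    rw [mul_one, hp.isSelfAdjoint.star_eq, hp.isIdempotentElem.eq] at this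
    rw [hp.isSelfAdjoint.star_eq, mul_sub, sub_mul, hp.isIdempotentElem.eq,
      hp.isIdempotentElem.eq]
    exact sub_nonpos.mpr this
  · exact star_left_conjugate_nonneg (sub_nonneg.mpr hpθ) p

theorem le_norm_smul_one_sub_of_mul_eq_zero {a : A} (ha : 0 ≤ a) (hp : IsStarProjection p)
    (hap : a * p = 0) : a ≤ ‖a‖ • (1 - p) := by
  have hq := hp.one_sub
  have hpa : p * a = 0 := by
    simpa [hp.isSelfAdjoint.star_eq, ha.isSelfAdjoint.star_eq] using congrArg star hap
  have hqaq : star (1 - p) * a * (1 - p) = a := by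
    rw [hq.isSelfAdjoint.star_eq, sub_mul, one_mul, hpa, sub_zero, mul_sub, mul_one, hap, sub_zero]
  have := star_left_conjugate_le_conjugate
    (IsSelfAdjoint.le_algebraMap_norm_self ha.isSelfAdjoint) (1 - p)
  rwa [hqaq, Algebra.algebraMap_eq_smul_one, mul_smul_comm, mul_one, smul_mul_assoc,
    hq.isSelfAdjoint.star_eq, hq.isIdempotentElem.eq] at this

theorem IsStarProjection.norm_sub_le_one (hp : IsStarProjection p) (hpθ : p ≤ θ)
    (hθ : θ ≤ 1) : ‖θ - p‖ ≤ 1 := by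
  refine (CStarAlgebra.norm_le_one_iff_of_nonneg _ (sub_nonneg.mpr hpθ)).mpr ?_
  calc θ - p ≤ θ := sub_le_self _ hp.nonneg
    _ ≤ 1 := hθ

theorem IsStarProjection.le_smul_one_add_smul (hp : IsStarProjection p) (hpθ : p ≤ θ)
    (hθ : θ ≤ 1) : θ ≤ ‖θ - p‖ • 1 + (1 - ‖θ - p‖) • p := by
  have := le_norm_smul_one_sub_of_mul_eq_zero (sub_nonneg.mpr hpθ) hp
    (hp.sub_mul_self_eq_zero hpθ hθ)
  calc θ = (θ - p) + p := (sub_add_cancel θ p).symm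
    _ ≤ ‖θ - p‖ • (1 - p) + p := by gcongr
    _ = ‖θ - p‖ • 1 + (1 - ‖θ - p‖) • p := by rw [smul_sub, sub_smul, one_smul]; abel

end CStar

open scoped MatrixOrder

namespace Matrix
variable {n : Type*} [Fintype n] [DecidableEq n]

theorem trace_mul_nonneg {A B : Matrix n n ℂ} (hA : 0 ≤ A) (hB : 0 ≤ B) :
    0 ≤ (A * B).trace := by
  obtain ⟨C, rfl⟩ := CStarAlgebra.nonneg_iff_eq_star_mul_self.mp hB
  rw [← mul_assoc, trace_mul_cycle]
  exact ((nonneg_iff_posSemidef.mp hA).mul_mul_conjTranspose_same C).trace_nonneg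

theorem trace_mul_le_trace_mul {A B χ : Matrix n n ℂ} (hAB : A ≤ B) (hχ : 0 ≤ χ) :
    (A * χ).trace ≤ (B * χ).trace := by
  simpa [sub_mul, trace_sub] using trace_mul_nonneg (sub_nonneg.mpr hAB) hχ

end Matrix

section Proj
variable {n : Type*} [Fintype n]

theorem isStarProjection_proj {ψ : n → ℂ} (hψ : star ψ ⬝ᵥ ψ = 1) :
    IsStarProjection (proj ψ) where
  isIdempotentElem := by
    rw [IsIdempotentElem, proj, Matrix.vecMulVec_mul_vecMulVec, hψ, one_smul]
  isSelfAdjoint := by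
    rw [IsSelfAdjoint, proj, Matrix.star_eq_conjTranspose, Matrix.conjTranspose_vecMulVec,
      star_star]

theorem trace_proj_mul (ψ : n → ℂ) (χ : Matrix n n ℂ) :
    (proj ψ * χ).trace = star ψ ⬝ᵥ χ *ᵥ ψ := by
  rw [proj, Matrix.vecMulVec_mul, Matrix.trace_vecMulVec, dotProduct_comm,
    Matrix.dotProduct_mulVec]

end Proj

theorem star_maxEnt_dotProduct_maxEnt {d : ℕ} (hd : d ≠ 0) :
    star (maxEnt d) ⬝ᵥ maxEnt d = 1 := by
  have hsq : star ((1 / Real.sqrt d : ℝ) : ℂ) * ((1 / Real.sqrt d : ℝ) : ℂ) = 1 / d := by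
    rw [Complex.star_def, Complex.conj_ofReal, ← Complex.ofReal_mul, div_mul_div_comm, one_mul,
      Real.mul_self_sqrt d.cast_nonneg]
    push_cast; rfl
  simp only [dotProduct, Fintype.sum_prod_type, Pi.star_apply, maxEnt, apply_ite star, star_zero,
    ite_mul, zero_mul, hsq, Finset.sum_ite_eq, Finset.mem_univ, if_true, Finset.sum_const,
    Finset.card_univ, Fintype.card_fin, nsmul_eq_mul]
  field_simp

theorem trace_ptrace1 {d : ℕ} (M : Matrix (Fin d × Fin d) (Fin d × Fin d) ℂ) :
    (ptrace1 M).trace = M.trace := by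
  rw [Matrix.trace, Matrix.trace, Fintype.sum_prod_type, Finset.sum_comm]
  rfl

theorem re_trace_mul_le_of_proj_le {n : Type*} [Fintype n] [DecidableEq n]
    {Θ χ : Matrix n n ℂ} {ψ : n → ℂ} (hψ : star ψ ⬝ᵥ ψ = 1)
    (hlow : proj ψ ≤ Θ) (hup : Θ ≤ 1) (hχ : 0 ≤ χ) (htr : χ.trace = 1) :
    (Θ * χ).trace.re ≤ ‖Θ - proj ψ‖ + (1 - ‖Θ - proj ψ‖) * (star ψ ⬝ᵥ χ *ᵥ ψ).re := by
  have := Matrix.trace_mul_le_trace_mul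
    ((isStarProjection_proj hψ).le_smul_one_add_smul hlow hup) hχ
  rw [add_mul, smul_mul_assoc, smul_mul_assoc, one_mul, Matrix.trace_add, Matrix.trace_smul,
    Matrix.trace_smul, htr, trace_proj_mul] at this
  simpa using (Complex.le_def.mp this).1

/-- for a balanced strategy with process verification operator
`|Φ⟩⟨Φ| ≤ Θ ≤ 1` and spectral gap `ν = 1 − ‖Θ − |Φ⟩⟨Φ|‖`, the maximal passing probability
satisfies `p_E(Θ, ε) ≤ 1 − νε` for all `ε ∈ [0,1]`. -/
theorem stmt_14 (d : ℕ) (hd : 0 < d)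
    (Θ : Matrix (Fin d × Fin d) (Fin d × Fin d) ℂ)
    (hlow : (Θ - proj (maxEnt d)).PosSemidef)
    (hup : ((1 : Matrix (Fin d × Fin d) (Fin d × Fin d) ℂ) - Θ).PosSemidef)
    (ν : ℝ) (hν : ν = 1 - ‖Θ - proj (maxEnt d)‖) :
    ∀ ε ∈ Set.Icc (0 : ℝ) 1, pE d Θ ε ≤ 1 - ν * ε := by
  rintro ε ⟨hε0, hε1⟩
  have hΦ := star_maxEnt_dotProduct_maxEnt hd.ne'
  have hlow' : proj (maxEnt d) ≤ Θ := Matrix.le_iff.mpr hlow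
  have hup' : Θ ≤ 1 := Matrix.le_iff.mpr hup
  have hν0 : 0 ≤ ν := hν ▸ sub_nonneg.mpr ((isStarProjection_proj hΦ).norm_sub_le_one hlow' hup')
  have hν1 : ν ≤ 1 := hν ▸ sub_le_self _ (norm_nonneg _)
  refine Real.sSup_le ?_ (by nlinarith)
  rintro _ ⟨χ, hχ, hptr, hfid, rfl⟩
  have htr : χ.trace = 1 := by
    rw [← trace_ptrace1, hptr, Matrix.trace_smul, Matrix.trace_one, Fintype.card_fin, smul_eq_mul]
    field_simp
  calc (Θ * χ).trace.re
      ≤ (1 - ν) + ν * (star (maxEnt d) ⬝ᵥ χ *ᵥ maxEnt d).re := by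
        simpa [hν] using re_trace_mul_le_of_proj_le hΦ hlow' hup' hχ.nonneg htr
    _ ≤ (1 - ν) + ν * (1 - ε) := by gcongr
    _ = 1 - ν * ε := by ring
end
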